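/- For every z ∈ ℂ∖(−∞,0] such that sin(nπz − βπ/2) ≠ 0 and B(z) ≠ 0, the following identities hold: Δ₊(z)∇₊(z) = e^{2iθ(z)} and Δ₋(z)∇₋(z) = e^{−2iθ(z)}; ∇₋(z) − ∇₊(z) = −C z^{β−1} e^{−n v(z)} W(z) B(z)²; and Δ₋(z) − Δ₊(z) = 4 sin²θ(z) / (C z^{β−1} e^{−n v(z)} W(z) B(z)²), where θ(z) := nπz − βπ/2, v(z) := −z log c, C := 2iπ c^{−β/2} n^{β}, and W(z) := (nz)^{1−β} Γ(nz + β/2)/Γ(nz + 1 − β/2), with z^{β−1} and (nz)^{1−β} taken as principal powers. -/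

import Mathlib

open Complex Finset Filter Topology

/-- The weight `w(x) := Γ(x+β) cˣ / Γ(x+1)`. -/
noncomputable def weight (β c : ℝ) (s : ℂ) : ℂ :=
  Complex.Gamma (s + (β : ℂ)) * (c : ℂ) ^ s / Complex.Gamma (s + 1)

/-- The node `X_k := (k + β/2)/n`. -/
noncomputable def node (β : ℝ) (n : ℕ) (k : ℕ) : ℂ := ((k : ℂ) + (β : ℂ) / 2) / (n : ℂ)

/-- `B(z) := ∏_{j=0}^{n−1} (z − X_j)`. -/
noncomputable def Bprod (β : ℝ) (n : ℕ) (z : ℂ) : ℂ := ∏ j ∈ Finset.range n, (z - node β n j)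

/-- `∇_±(z) := nπ w(nz−β/2) B(z)² / (e^{∓iπ(nz−β/2)} sin(nπz − βπ/2))`; the sign `σ = ±1`
selects `∇_+` resp. `∇_−`. -/
noncomputable def nablaPM (β c : ℝ) (n : ℕ) (σ : ℤ) (z : ℂ) : ℂ :=
  (n : ℂ) * (Real.pi : ℂ) * weight β c ((n : ℂ) * z - (β : ℂ) / 2) * (Bprod β n z) ^ 2 /
    (Complex.exp (-(σ : ℂ) * Complex.I * (Real.pi : ℂ) * ((n : ℂ) * z - (β : ℂ) / 2)) *
      Complex.sin ((n : ℂ) * (Real.pi : ℂ) * z - (β : ℂ) * (Real.pi : ℂ) / 2))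

/-- `Δ_±(z) := e^{±iπ(nz−β/2)} sin(nπz − βπ/2) / (nπ w(nz−β/2) B(z)²)`; the sign `σ = ±1`
selects `Δ_+` resp. `Δ_−`. -/
noncomputable def deltaPM (β c : ℝ) (n : ℕ) (σ : ℤ) (z : ℂ) : ℂ :=
  Complex.exp ((σ : ℂ) * Complex.I * (Real.pi : ℂ) * ((n : ℂ) * z - (β : ℂ) / 2)) *
    Complex.sin ((n : ℂ) * (Real.pi : ℂ) * z - (β : ℂ) * (Real.pi : ℂ) / 2) /
    ((n : ℂ) * (Real.pi : ℂ) * weight β c ((n : ℂ) * z - (β : ℂ) / 2) * (Bprod β n z) ^ 2)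

/-- `θ(z) := nπz − βπ/2`. -/
noncomputable def theta (β : ℝ) (n : ℕ) (z : ℂ) : ℂ :=
  (n : ℂ) * (Real.pi : ℂ) * z - (β : ℂ) * (Real.pi : ℂ) / 2

/-- `v(z) := −z log c`. -/
noncomputable def vfun (c : ℝ) (z : ℂ) : ℂ := -z * (Real.log c : ℂ)

/-- `C := 2iπ c^{−β/2} n^{β}`. -/
noncomputable def Cconst (β c : ℝ) (n : ℕ) : ℂ :=
  2 * Complex.I * (Real.pi : ℂ) * (c : ℂ) ^ (-(β : ℂ) / 2) * (n : ℂ) ^ (β : ℂ)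

/-- `W(z) := (nz)^{1−β} Γ(nz + β/2)/Γ(nz + 1 − β/2)`. -/
noncomputable def Wfun (β : ℝ) (n : ℕ) (z : ℂ) : ℂ :=
  ((n : ℂ) * z) ^ (1 - (β : ℂ)) * Complex.Gamma ((n : ℂ) * z + (β : ℂ) / 2) /
    Complex.Gamma ((n : ℂ) * z + 1 - (β : ℂ) / 2)

open scoped Real

/-! Since `π(nz - β/2) = θ`, the prefactors of `∇_±` and `Δ_±` are `e^{±iθ} sin θ`, and the
identities follow from `e^{iθ} e^{-iθ} = 1` and `e^{-iθ} - e^{iθ} = -2i sin θ`, once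
`C z^{β-1} e^{-n v(z)} W(z) = 2iπ n w(nz - β/2)` is known. That rests on
`(nz)^{1-β} = n^{1-β} z^{1-β}` (valid as `n > 0`) and `c^{nz-β/2} = c^{-β/2} e^{-n v(z)}` (valid as
`c > 0`). The weight does not vanish because for `0 ≤ β ≤ 2` both Gamma arguments `nz + β/2` and
`nz + 1 - β/2` stay in the slit plane, away from the poles of `Γ`. -/

lemma ofReal_mul_cpow {r : ℝ} (hr : 0 < r) (z w : ℂ) :
    ((r : ℂ) * z) ^ w = (r : ℂ) ^ w * z ^ w := by
  rcases eq_or_ne z 0 with rfl | hz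
  · rcases eq_or_ne w 0 with rfl | hw <;> simp [*]
  have hr0 : (r : ℂ) ≠ 0 := ofReal_ne_zero.2 hr.ne'
  rw [cpow_def_of_ne_zero (mul_ne_zero hr0 hz), cpow_def_of_ne_zero hr0, cpow_def_of_ne_zero hz,
    log_ofReal_mul hr hz, ← exp_add, add_mul, ofReal_log hr.le]

lemma exp_neg_mul_I_sub_exp_mul_I (t : ℂ) : exp (-t * I) - exp (t * I) = -2 * I * sin t := by
  rw [exp_mul_I, exp_mul_I, cos_neg, sin_neg]
  ring

lemma Gamma_ne_zero_of_mem_slitPlane {s : ℂ} (hs : s ∈ slitPlane) : Gamma s ≠ 0 := by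
  refine Gamma_ne_zero fun m hm => ?_
  rcases mem_slitPlane_iff.1 hs with hre | him
  · simp only [hm, neg_re, natCast_re] at hre
    linarith [(m.cast_nonneg : (0 : ℝ) ≤ m)]
  · simp [hm] at him

lemma ofReal_mul_add_mem_slitPlane {r a : ℝ} (hr : 0 < r) (ha : 0 ≤ a) {z : ℂ}
    (hz : z ∈ slitPlane) : (r : ℂ) * z + a ∈ slitPlane := by
  rw [mem_slitPlane_iff] at hz ⊢
  simp only [add_re, add_im, re_ofReal_mul, im_ofReal_mul, ofReal_re, ofReal_im, add_zero]
  rcases hz with hre | him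
  · exact Or.inl (by positivity)
  · exact Or.inr (mul_ne_zero hr.ne' him)

lemma weight_ne_zero_of_mem_slitPlane {β c r : ℝ} (hc : 0 < c) (hβ0 : 0 ≤ β) (hβ2 : β ≤ 2)
    (hr : 0 < r) {z : ℂ} (hz : z ∈ slitPlane) : weight β c (r * z - β / 2) ≠ 0 := by
  have hΓβ : Gamma (r * z - β / 2 + β) ≠ 0 := by
    have := ofReal_mul_add_mem_slitPlane hr (by linarith : 0 ≤ β / 2) hz
    exact Gamma_ne_zero_of_mem_slitPlane (by convert this using 1; push_cast; ring)
  have hΓ1 : Gamma (r * z - β / 2 + 1) ≠ 0 := by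
    have := ofReal_mul_add_mem_slitPlane hr (by linarith : 0 ≤ 1 - β / 2) hz
    exact Gamma_ne_zero_of_mem_slitPlane (by convert this using 1; push_cast; ring)
  have hcpow : (c : ℂ) ^ (r * z - β / 2) ≠ 0 :=
    cpow_ne_zero_iff.2 (Or.inl (ofReal_ne_zero.2 hc.ne'))
  exact div_ne_zero (mul_ne_zero hΓβ hcpow) hΓ1

section

variable {β c : ℝ} {n : ℕ} {z : ℂ}

lemma pi_mul_sub_eq_theta : (π : ℂ) * (n * z - β / 2) = theta β n z := by
  unfold theta
  ring

lemma deltaPM_eq (σ : ℤ) :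
    deltaPM β c n σ z = exp (σ * theta β n z * I) * sin (theta β n z) /
      (n * π * weight β c (n * z - β / 2) * Bprod β n z ^ 2) := by
  rw [deltaPM, ← pi_mul_sub_eq_theta]
  ring_nf

lemma nablaPM_eq (σ : ℤ) :
    nablaPM β c n σ z = n * π * weight β c (n * z - β / 2) * Bprod β n z ^ 2 /
      (exp (-σ * theta β n z * I) * sin (theta β n z)) := by
  rw [nablaPM, ← pi_mul_sub_eq_theta]
  ring_nf

lemma deltaPM_mul_nablaPM (σ : ℤ) (hn : n ≠ 0) (hw : weight β c (n * z - β / 2) ≠ 0)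
    (hB : Bprod β n z ≠ 0) (hS : sin (theta β n z) ≠ 0) :
    deltaPM β c n σ z * nablaPM β c n σ z = exp (2 * σ * theta β n z * I) := by
  rw [deltaPM_eq, nablaPM_eq]
  set D := (n : ℂ) * π * weight β c (n * z - β / 2) * Bprod β n z ^ 2
  have hD : D ≠ 0 := by
    have : (n : ℂ) ≠ 0 := Nat.cast_ne_zero.2 hn
    have : (π : ℂ) ≠ 0 := ofReal_ne_zero.2 Real.pi_ne_zero
    positivity
  rw [div_mul_div_comm, mul_comm _ D, mul_div_mul_left _ _ hD, mul_div_mul_right _ _ hS,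
    ← exp_sub]
  ring_nf

lemma nablaPM_neg_one_sub_nablaPM_one (hS : sin (theta β n z) ≠ 0) :
    nablaPM β c n (-1) z - nablaPM β c n 1 z =
      -(2 * I * π * n * weight β c (n * z - β / 2) * Bprod β n z ^ 2) := by
  simp only [nablaPM_eq, Int.cast_neg, Int.cast_one, neg_one_mul, one_mul, neg_neg]
  set θ := theta β n z
  have hprod : exp (θ * I) * exp (-θ * I) = 1 := by rw [← exp_add]; ring_nf; exact exp_zero
  rw [div_sub_div _ _ (by simp [hS]) (by simp [hS]), div_eq_iff (by simp [hS])]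
  linear_combination (n * π * weight β c (n * z - β / 2) * Bprod β n z ^ 2 * sin θ) *
    exp_neg_mul_I_sub_exp_mul_I θ + (2 * I * π * n * weight β c (n * z - β / 2) *
      Bprod β n z ^ 2 * sin θ ^ 2) * hprod

lemma deltaPM_neg_one_sub_deltaPM_one :
    deltaPM β c n (-1) z - deltaPM β c n 1 z =
      4 * sin (theta β n z) ^ 2 /
        (2 * I * π * n * weight β c (n * z - β / 2) * Bprod β n z ^ 2) := by
  simp only [deltaPM_eq, Int.cast_neg, Int.cast_one, neg_one_mul, one_mul]
  rw [div_sub_div_same, ← sub_mul, exp_neg_mul_I_sub_exp_mul_I]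
  field_simp
  ring_nf
  rw [I_sq]
  ring

lemma Cconst_mul_cpow_mul_exp_mul_Wfun (hc : 0 < c) (hn : n ≠ 0) (hz : z ≠ 0) :
    Cconst β c n * z ^ ((β : ℂ) - 1) * exp (-(n : ℂ) * vfun c z) * Wfun β n z =
      2 * I * π * n * weight β c (n * z - β / 2) := by
  have hc0 : (c : ℂ) ≠ 0 := ofReal_ne_zero.2 hc.ne'
  have hsplit :
      ((n : ℂ) * z) ^ (1 - (β : ℂ)) = (n : ℂ) ^ (1 - (β : ℂ)) * z ^ (1 - (β : ℂ)) := by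
    simpa using ofReal_mul_cpow (Nat.cast_pos.2 (Nat.pos_of_ne_zero hn) : (0 : ℝ) < n) z (1 - β)
  have hcpow :
      (c : ℂ) ^ ((n : ℂ) * z - β / 2) = c ^ (-(β : ℂ) / 2) * exp (-(n : ℂ) * vfun c z) := by
    rw [sub_eq_neg_add, ← neg_div, cpow_add _ _ hc0, cpow_def_of_ne_zero hc0 ((n : ℂ) * z),
      ← ofReal_log hc.le, vfun]
    ring_nf
  have hnpow : (n : ℂ) ^ (β : ℂ) * (n : ℂ) ^ (1 - (β : ℂ)) = n := by
    rw [← cpow_add _ _ (Nat.cast_ne_zero.2 hn)]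
    simp
  have hzpow : z ^ ((β : ℂ) - 1) * z ^ (1 - (β : ℂ)) = 1 := by
    rw [← cpow_add _ _ hz]
    simp
  rw [Cconst, Wfun, weight, hsplit, hcpow,
    show (n : ℂ) * z - β / 2 + β = n * z + β / 2 by ring,
    show (n : ℂ) * z - β / 2 + 1 = n * z + 1 - β / 2 by ring]
  linear_combination (2 * I * π * c ^ (-(β : ℂ) / 2) * exp (-(n : ℂ) * vfun c z) *
    Gamma (n * z + β / 2) / Gamma (n * z + 1 - β / 2)) *
      (z ^ ((β : ℂ) - 1) * z ^ (1 - (β : ℂ)) * hnpow + n * hzpow)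

end

theorem nabla_delta_identities_general (c β : ℝ) (hc0 : 0 < c)
    (hβ1 : 1 ≤ β) (hβ2 : β < 2) (n : ℕ) (hn : 1 ≤ n) (z : ℂ)
    (hz : ¬(z.im = 0 ∧ z.re ≤ 0))
    (hsin : Complex.sin ((n : ℂ) * (Real.pi : ℂ) * z - (β : ℂ) * (Real.pi : ℂ) / 2) ≠ 0)
    (hB : Bprod β n z ≠ 0) :
    deltaPM β c n 1 z * nablaPM β c n 1 z = Complex.exp (2 * Complex.I * theta β n z) ∧
    deltaPM β c n (-1) z * nablaPM β c n (-1) z = Complex.exp (-(2 * Complex.I * theta β n z)) ∧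
    nablaPM β c n (-1) z - nablaPM β c n 1 z =
      -(Cconst β c n * z ^ ((β : ℂ) - 1) * Complex.exp (-(n : ℂ) * vfun c z) * Wfun β n z *
        (Bprod β n z) ^ 2) ∧
    deltaPM β c n (-1) z - deltaPM β c n 1 z =
      4 * (Complex.sin (theta β n z)) ^ 2 /
        (Cconst β c n * z ^ ((β : ℂ) - 1) * Complex.exp (-(n : ℂ) * vfun c z) * Wfun β n z *
          (Bprod β n z) ^ 2) := by
  have hz : z ∈ slitPlane := by
    rw [mem_slitPlane_iff]
    by_contra! h
    exact hz ⟨h.2, h.1⟩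
  have hn0 : n ≠ 0 := by omega
  have hw : weight β c (n * z - β / 2) ≠ 0 := by
    simpa using weight_ne_zero_of_mem_slitPlane hc0 (by linarith) hβ2.le (Nat.cast_pos.2 hn) hz
  change sin (theta β n z) ≠ 0 at hsin
  rw [Cconst_mul_cpow_mul_exp_mul_Wfun hc0 hn0 (slitPlane_ne_zero hz)]
  refine ⟨?_, ?_, nablaPM_neg_one_sub_nablaPM_one hsin, deltaPM_neg_one_sub_deltaPM_one⟩
  · rw [deltaPM_mul_nablaPM 1 hn0 hw hB hsin]
    push_cast
    ring_nf
  · rw [deltaPM_mul_nablaPM (-1) hn0 hw hB hsin]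
    push_cast
    ring_nf

/-- The identities (2.22)–(2.24) for `∇_±` and `Δ_±`. -/
theorem nabla_delta_identities (c β : ℝ) (hc0 : 0 < c) (hc1 : c < 1)
    (hβ1 : 1 ≤ β) (hβ2 : β < 2) (n : ℕ) (hn : 1 ≤ n) (z : ℂ)
    (hz : ¬(z.im = 0 ∧ z.re ≤ 0))
    (hsin : Complex.sin ((n : ℂ) * (Real.pi : ℂ) * z - (β : ℂ) * (Real.pi : ℂ) / 2) ≠ 0)
    (hB : Bprod β n z ≠ 0) :
    deltaPM β c n 1 z * nablaPM β c n 1 z = Complex.exp (2 * Complex.I * theta β n z) ∧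
    deltaPM β c n (-1) z * nablaPM β c n (-1) z = Complex.exp (-(2 * Complex.I * theta β n z)) ∧
    nablaPM β c n (-1) z - nablaPM β c n 1 z =
      -(Cconst β c n * z ^ ((β : ℂ) - 1) * Complex.exp (-(n : ℂ) * vfun c z) * Wfun β n z *
        (Bprod β n z) ^ 2) ∧
    deltaPM β c n (-1) z - deltaPM β c n 1 z =
      4 * (Complex.sin (theta β n z)) ^ 2 /
        (Cconst β c n * z ^ ((β : ℂ) - 1) * Complex.exp (-(n : ℂ) * vfun c z) * Wfun β n z *
          (Bprod β n z) ^ 2) :=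
  nabla_delta_identities_general c β hc0 hβ1 hβ2 n hn z hz hsin hB
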